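/- Let W be a finite-dimensional real inner product space, K a compact subgroup of the orthogonal group O(W), T a finite set, and for each t ∈ T let U_t be an open, relatively compact subset of W such that 0 is not in the closure of K·U_t. Assume that the unit sphere of W is contained in ∪_{t∈T} K·U_t. Then there exists r > 1 such that the annulus {w ∈ W : 1 ≤ |w| ≤ r} is contained in ∪_{t∈T} K·U_t; consequently, for any such r the family {r^j K·U_t : t ∈ T, j ∈ ℤ} is an open cover of W \ {0} which is locally finite (every point of W \ {0} has a neighbourhood meeting only finitely many members of the family). -/
import Mathlib

open MeasureTheory Pointwise

/-- Action of a matrix on `ℝ^n` with the Euclidean structure. -/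
noncomputable def mact (n : ℕ) (g : Matrix (Fin n) (Fin n) ℝ) (x : EuclideanSpace ℝ (Fin n)) :
    EuclideanSpace ℝ (Fin n) :=
  (WithLp.equiv 2 (Fin n → ℝ)).symm (g.mulVec (WithLp.equiv 2 (Fin n → ℝ) x))

/-- `K·U`: the union of the images of `U` under the elements of `K`. -/
def KUset (n : ℕ) (K : Subgroup ↥(Matrix.orthogonalGroup (Fin n) ℝ))
    (U : Set (EuclideanSpace ℝ (Fin n))) : Set (EuclideanSpace ℝ (Fin n)) :=
  ⋃ g ∈ K, (fun w => mact n ((g : Matrix (Fin n) (Fin n) ℝ)) w) '' U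

lemma mact_mact (n : ℕ) (a b : Matrix (Fin n) (Fin n) ℝ) (x : EuclideanSpace ℝ (Fin n)) :
    mact n a (mact n b x) = mact n (a * b) x := by
  simp [mact, Matrix.mulVec_mulVec]

lemma mact_one (n : ℕ) (x : EuclideanSpace ℝ (Fin n)) : mact n 1 x = x := by
  simp [mact]

lemma mact_continuous (n : ℕ) (g : Matrix (Fin n) (Fin n) ℝ) : Continuous (mact n g) := by
  have h : (mact n g) = fun x => (Matrix.toEuclideanLin g) x := rfl
  rw [h]
  exact (Matrix.toEuclideanLin g).continuous_of_finiteDimensional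

lemma mact_norm (n : ℕ) (g : ↥(Matrix.orthogonalGroup (Fin n) ℝ))
    (x : EuclideanSpace ℝ (Fin n)) : ‖mact n g.1 x‖ = ‖x‖ := by
  have hg : star (g : Matrix (Fin n) (Fin n) ℝ) * g = 1 :=
    (Matrix.mem_orthogonalGroup_iff' (Fin n) ℝ).mp g.2
  have key : ∀ v : Fin n → ℝ,
      dotProduct (g.1.mulVec v) (g.1.mulVec v) = dotProduct v v := by
    intro v
    rw [Matrix.dotProduct_mulVec, ← Matrix.mulVec_transpose, Matrix.mulVec_mulVec]
    have : Matrix.transpose g.1 * g.1 = 1 := by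
      simpa [Matrix.star_eq_conjTranspose] using hg
    rw [this, Matrix.one_mulVec]
  have h1 : ‖mact n g.1 x‖ ^ 2 = ‖x‖ ^ 2 := by
    rw [← real_inner_self_eq_norm_sq, ← real_inner_self_eq_norm_sq]
    simp only [mact, PiLp.inner_apply, RCLike.inner_apply, conj_trivial]
    exact key _
  rwa [sq_eq_sq_iff_abs_eq_abs, abs_norm, abs_norm] at h1

lemma KUset_open (n : ℕ) (K : Subgroup ↥(Matrix.orthogonalGroup (Fin n) ℝ))
    (S : Set (EuclideanSpace ℝ (Fin n))) (hS : IsOpen S) : IsOpen (KUset n K S) := by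
  apply isOpen_biUnion
  intro g _
  have himg : (fun w => mact n (g : Matrix (Fin n) (Fin n) ℝ) w) '' S
      = (fun w => mact n ((g⁻¹ : ↥(Matrix.orthogonalGroup (Fin n) ℝ)) : Matrix (Fin n) (Fin n) ℝ) w) ⁻¹' S := by
    have h1 : Function.LeftInverse
        (fun w => mact n ((g⁻¹ : ↥(Matrix.orthogonalGroup (Fin n) ℝ)) : Matrix (Fin n) (Fin n) ℝ) w)
        (fun w => mact n (g : Matrix (Fin n) (Fin n) ℝ) w) := by
      intro x
      simp [mact_mact, ← MulMemClass.coe_mul, mact_one]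
    have h2 : Function.RightInverse
        (fun w => mact n ((g⁻¹ : ↥(Matrix.orthogonalGroup (Fin n) ℝ)) : Matrix (Fin n) (Fin n) ℝ) w)
        (fun w => mact n (g : Matrix (Fin n) (Fin n) ℝ) w) := by
      intro x
      simp [mact_mact, ← MulMemClass.coe_mul, mact_one]
    exact congrFun (Set.image_eq_preimage_of_inverse h1 h2) S
  rw [himg]
  exact hS.preimage (mact_continuous n _)

lemma KUset_norm (n : ℕ) (K : Subgroup ↥(Matrix.orthogonalGroup (Fin n) ℝ))
    (S : Set (EuclideanSpace ℝ (Fin n))) {x : EuclideanSpace ℝ (Fin n)}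
    (hx : x ∈ KUset n K S) : ∃ u ∈ S, ‖x‖ = ‖u‖ := by
  simp only [KUset, Set.mem_iUnion, Set.mem_image] at hx
  obtain ⟨g, _, u, hu, rfl⟩ := hx
  exact ⟨u, hu, mact_norm n g u⟩

lemma finite_zpow_band {r a b : ℝ} (hr : 1 < r) (ha : 0 < a) :
    {j : ℤ | a ≤ r ^ j ∧ r ^ j ≤ b}.Finite := by
  have hlogb : ∀ j : ℤ, Real.logb r (r ^ j) = j := by
    intro j
    have hlog : Real.log r ≠ 0 := ne_of_gt (Real.log_pos hr)
    rw [Real.logb, Real.log_zpow, mul_div_assoc, div_self hlog, mul_one]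
  apply Set.Finite.subset (Set.finite_Icc ⌈Real.logb r a⌉ ⌊Real.logb r b⌋)
  rintro j ⟨h1, h2⟩
  have hrj : (0:ℝ) < r ^ j := zpow_pos (by linarith) j
  constructor
  · rw [Int.ceil_le]
    calc Real.logb r a ≤ Real.logb r (r ^ j) := Real.logb_le_logb_of_le hr ha h1
    _ = j := hlogb j
  · rw [Int.le_floor]
    calc (j : ℝ) = Real.logb r (r ^ j) := (hlogb j).symm
    _ ≤ Real.logb r b := Real.logb_le_logb_of_le hr hrj h2

theorem stmt11 (n : ℕ) (K : Subgroup ↥(Matrix.orthogonalGroup (Fin n) ℝ))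
    (hK : IsCompact (K : Set ↥(Matrix.orthogonalGroup (Fin n) ℝ)))
    (T : Type*) [Fintype T] (U : T → Set (EuclideanSpace ℝ (Fin n)))
    (hUopen : ∀ t, IsOpen (U t)) (hUcomp : ∀ t, IsCompact (closure (U t)))
    (hU0 : ∀ t, (0 : EuclideanSpace ℝ (Fin n)) ∉ closure (KUset n K (U t)))
    (hsphere : {w : EuclideanSpace ℝ (Fin n) | ‖w‖ = 1} ⊆ ⋃ t, KUset n K (U t)) :
    -- there is r > 1 such that the annulus {1 ≤ |w| ≤ r} is covered
    (∃ r : ℝ, 1 < r ∧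
      {w : EuclideanSpace ℝ (Fin n) | 1 ≤ ‖w‖ ∧ ‖w‖ ≤ r} ⊆ ⋃ t, KUset n K (U t)) ∧
    -- and for any such r, the dilated family is a locally finite open cover of W \ {0}
    (∀ r : ℝ, 1 < r →
      {w : EuclideanSpace ℝ (Fin n) | 1 ≤ ‖w‖ ∧ ‖w‖ ≤ r} ⊆ (⋃ t, KUset n K (U t)) →
      ((∀ p : T × ℤ, IsOpen ((r ^ p.2 : ℝ) • KUset n K (U p.1))) ∧
       (∀ w : EuclideanSpace ℝ (Fin n), w ≠ 0 →
          ∃ p : T × ℤ, w ∈ (r ^ p.2 : ℝ) • KUset n K (U p.1)) ∧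
       (∀ w : EuclideanSpace ℝ (Fin n), w ≠ 0 →
          ∃ V ∈ nhds w,
            {p : T × ℤ | (((r ^ p.2 : ℝ) • KUset n K (U p.1)) ∩ V).Nonempty}.Finite))) := by
  have hOopen : IsOpen (⋃ t, KUset n K (U t)) :=
    isOpen_iUnion fun t => KUset_open n K (U t) (hUopen t)
  constructor
  · -- existence of r
    have hsph_eq : {w : EuclideanSpace ℝ (Fin n) | ‖w‖ = 1} = Metric.sphere (0 : EuclideanSpace ℝ (Fin n)) 1 := by
      ext w; simp [Metric.mem_sphere, dist_zero_right]
    have hc : IsCompact {w : EuclideanSpace ℝ (Fin n) | ‖w‖ = 1} := by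
      rw [hsph_eq]; exact isCompact_sphere 0 1
    obtain ⟨δ, hδ, hthick⟩ := hc.exists_thickening_subset_open hOopen hsphere
    refine ⟨1 + δ / 2, by linarith, ?_⟩
    rintro w ⟨hw1, hw2⟩
    apply hthick
    rw [Metric.mem_thickening_iff]
    have hwpos : (0:ℝ) < ‖w‖ := by linarith
    refine ⟨‖w‖⁻¹ • w, ?_, ?_⟩
    · show ‖_‖ = 1
      rw [norm_smul, norm_inv, norm_norm, inv_mul_cancel₀ hwpos.ne']
    · rw [dist_eq_norm]
      have : w - ‖w‖⁻¹ • w = (1 - ‖w‖⁻¹) • w := by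
        rw [sub_smul, one_smul]
      rw [this, norm_smul, Real.norm_eq_abs]
      have h1 : (0:ℝ) ≤ 1 - ‖w‖⁻¹ := by
        have : ‖w‖⁻¹ ≤ 1 := by
          rw [inv_le_one_iff₀]; right; exact hw1
        linarith
      rw [abs_of_nonneg h1, sub_mul, one_mul, inv_mul_cancel₀ hwpos.ne']
      linarith
  · -- second part
    intro r hr hann
    have hr0 : (0:ℝ) < r := by linarith
    have hrj0 : ∀ j : ℤ, (0:ℝ) < r ^ j := fun j => zpow_pos hr0 j
    refine ⟨?_, ?_, ?_⟩
    · rintro ⟨t, j⟩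
      exact (KUset_open n K (U t) (hUopen t)).smul₀ (hrj0 j).ne'
    · intro w hw
      have hwpos : (0:ℝ) < ‖w‖ := norm_pos_iff.mpr hw
      obtain ⟨j, hj1, hj2⟩ := exists_mem_Ico_zpow hwpos hr
      have hv : (r ^ j)⁻¹ • w ∈ ⋃ t, KUset n K (U t) := by
        apply hann
        have hnv : ‖(r ^ j : ℝ)⁻¹ • w‖ = (r ^ j)⁻¹ * ‖w‖ := by
          rw [norm_smul, norm_inv, Real.norm_eq_abs, abs_of_pos (hrj0 j)]
        constructor
        · rw [hnv, le_inv_mul_iff₀ (hrj0 j), mul_one]; exact hj1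
        · rw [hnv, inv_mul_le_iff₀ (hrj0 j)]
          have : r ^ (j + 1) = r ^ j * r := by
            rw [zpow_add_one₀ hr0.ne']
          rw [mul_comm]
          linarith [hj2, this ▸ hj2]
      rw [Set.mem_iUnion] at hv
      obtain ⟨t, ht⟩ := hv
      exact ⟨(t, j), (Set.mem_smul_set_iff_inv_smul_mem₀ (hrj0 j).ne' _ _).mpr ht⟩
    · intro w hw
      have hwpos : (0:ℝ) < ‖w‖ := norm_pos_iff.mpr hw
      -- upper bounds
      have hub : ∀ t, ∃ M : ℝ, 0 < M ∧ ∀ x ∈ KUset n K (U t), ‖x‖ ≤ M := by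
        intro t
        obtain ⟨M, hM⟩ := (hUcomp t).isBounded.exists_norm_le
        refine ⟨max M 1, lt_max_of_lt_right one_pos, ?_⟩
        intro x hx
        obtain ⟨u, hu, hxu⟩ := KUset_norm n K (U t) hx
        calc ‖x‖ = ‖u‖ := hxu
        _ ≤ M := hM u (subset_closure hu)
        _ ≤ max M 1 := le_max_left _ _
      -- lower bounds
      have hlb : ∀ t, ∃ ε : ℝ, 0 < ε ∧ ∀ x ∈ KUset n K (U t), ε ≤ ‖x‖ := by
        intro t
        have h0 := hU0 t
        have hopen : IsOpen (closure (KUset n K (U t)))ᶜ := isClosed_closure.isOpen_compl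
        obtain ⟨ε, hε, hball⟩ := Metric.isOpen_iff.mp hopen 0 h0
        refine ⟨ε, hε, ?_⟩
        intro x hx
        by_contra hlt
        push_neg at hlt
        have : x ∈ Metric.ball (0 : EuclideanSpace ℝ (Fin n)) ε := by
          rw [Metric.mem_ball, dist_zero_right]; exact hlt
        exact hball this (subset_closure hx)
      choose M hM0 hM using hub
      choose ε hε0 hε using hlb
      refine ⟨{v | ‖w‖ / 2 < ‖v‖ ∧ ‖v‖ < 2 * ‖w‖}, ?_, ?_⟩
      · have hVopen : IsOpen {v : EuclideanSpace ℝ (Fin n) | ‖w‖ / 2 < ‖v‖ ∧ ‖v‖ < 2 * ‖w‖} := by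
          have : {v : EuclideanSpace ℝ (Fin n) | ‖w‖ / 2 < ‖v‖ ∧ ‖v‖ < 2 * ‖w‖}
              = (fun v : EuclideanSpace ℝ (Fin n) => ‖v‖) ⁻¹' (Set.Ioo (‖w‖ / 2) (2 * ‖w‖)) := rfl
          rw [this]
          exact isOpen_Ioo.preimage continuous_norm
        exact hVopen.mem_nhds ⟨by linarith, by linarith⟩
      · have hfin : ∀ t : T, {j : ℤ | ‖w‖ / (2 * M t) ≤ r ^ j ∧ r ^ j ≤ 2 * ‖w‖ / ε t}.Finite :=
          fun t => finite_zpow_band hr (div_pos hwpos (mul_pos two_pos (hM0 t)))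
        apply Set.Finite.subset
          (Set.Finite.biUnion Set.finite_univ
            (fun t (_ : t ∈ (Set.univ : Set T)) => (hfin t).image (fun j => ((t, j) : T × ℤ))))
        rintro ⟨t, j⟩ hp
        obtain ⟨x, hx1, hx2, hx3⟩ := hp
        obtain ⟨y, hy, rfl⟩ := hx1
        have hny : ‖(r ^ j : ℝ) • y‖ = r ^ j * ‖y‖ := by
          rw [norm_smul, Real.norm_eq_abs, abs_of_pos (hrj0 j)]
        have h1 : ε t ≤ ‖y‖ := hε t y hy
        have h2 : ‖y‖ ≤ M t := hM t y hy
        have h3 : ‖w‖ / 2 < r ^ j * ‖y‖ := by rw [← hny]; exact hx2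
        have h4 : r ^ j * ‖y‖ < 2 * ‖w‖ := by rw [← hny]; exact hx3
        simp only [Set.mem_iUnion, Set.mem_image, Set.mem_setOf_eq]
        refine ⟨t, trivial, j, ⟨?_, ?_⟩, rfl⟩
        · rw [div_le_iff₀ (mul_pos two_pos (hM0 t))]
          have : r ^ j * ‖y‖ ≤ r ^ j * M t :=
            mul_le_mul_of_nonneg_left h2 (hrj0 j).le
          nlinarith [hrj0 j]
        · rw [le_div_iff₀ (hε0 t)]
          have : r ^ j * ε t ≤ r ^ j * ‖y‖ :=
            mul_le_mul_of_nonneg_left h1 (hrj0 j).le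
          linarith
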